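/- Let (X, μ1, μ2) be a generalized bitopological space, let i, j ∈ {1,2} with i ≠ j, and let A ⊆ X. The following are equivalent: (i) A is λ_{μi}-closed with respect to μj; (ii) A = P ∩ A^∧_{μj} for some μi-closed set P; (iii) A = cl_{μi}(A) ∩ L for some ∧_{μj}-set L; (iv) A = cl_{μi}(A) ∩ A^∧_{μj}. -/

import Mathlib

open Set

/-- A generalized topology on `X`: contains `∅` and is closed under arbitrary unions. -/
def IsGenTop {X : Type*} (μ : Set (Set X)) : Prop :=
  ∅ ∈ μ ∧ ∀ S ⊆ μ, ⋃₀ S ∈ μ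

/-- `A` is μ-closed iff its complement is μ-open. -/
def gClosedSet {X : Type*} (μ : Set (Set X)) (A : Set X) : Prop := Aᶜ ∈ μ

/-- μ-closure: intersection of all μ-closed sets containing `A`. -/
def gCl {X : Type*} (μ : Set (Set X)) (A : Set X) : Set X :=
  ⋂₀ {F | gClosedSet μ F ∧ A ⊆ F}

/-- `A^∧_μ`: intersection of all μ-open sets containing `A`. -/
def wedgeOp {X : Type*} (μ : Set (Set X)) (A : Set X) : Set X :=
  ⋂₀ {U | U ∈ μ ∧ A ⊆ U}

/-- `A^∨_μ`: union of all μ-closed sets contained in `A`. -/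
def veeOp {X : Type*} (μ : Set (Set X)) (A : Set X) : Set X :=
  ⋃₀ {F | gClosedSet μ F ∧ F ⊆ A}

/-- `L` is a `∧_μ`-set. -/
def IsWedgeSet {X : Type*} (μ : Set (Set X)) (L : Set X) : Prop := L = wedgeOp μ L

/-- `M` is a `∨_μ`-set. -/
def IsVeeSet {X : Type*} (μ : Set (Set X)) (M : Set X) : Prop := M = veeOp μ M

/-- `A` is `g_{μi}`-closed with respect to `μj`. -/
def GClosedWrt {X : Type*} (μi μj : Set (Set X)) (A : Set X) : Prop :=
  ∀ U ∈ μj, A ⊆ U → gCl μi A ⊆ U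

/-- `A` is `g_{μi}`-open with respect to `μj`. -/
def GOpenWrt {X : Type*} (μi μj : Set (Set X)) (A : Set X) : Prop :=
  GClosedWrt μi μj Aᶜ

/-- `A` is `λ_{μi}`-closed with respect to `μj`. -/
def LamClosedWrt {X : Type*} (μi μj : Set (Set X)) (A : Set X) : Prop :=
  ∃ F L : Set X, gClosedSet μi F ∧ IsWedgeSet μj L ∧ A = F ∩ L

/-- `A` is `λ_{μi}`-open with respect to `μj`. -/
def LamOpenWrt {X : Type*} (μi μj : Set (Set X)) (A : Set X) : Prop :=
  LamClosedWrt μi μj Aᶜ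

/-- `A` is pairwise `λ`-closed. -/
def PairwiseLamClosed {X : Type*} (μ1 μ2 : Set (Set X)) (A : Set X) : Prop :=
  ∃ F1 F2 L1 L2 : Set X, gClosedSet μ1 F1 ∧ gClosedSet μ2 F2 ∧
    IsWedgeSet μ1 L1 ∧ IsWedgeSet μ2 L2 ∧ A = (F1 ∩ F2) ∩ (L1 ∩ L2)

def PairwiseT0 {X : Type*} (μ1 μ2 : Set (Set X)) : Prop :=
  ∀ x y : X, x ≠ y →
    (∃ U ∈ μ1, x ∈ U ∧ y ∉ U) ∨ (∃ V ∈ μ2, y ∈ V ∧ x ∉ V)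

def PairwiseT1 {X : Type*} (μ1 μ2 : Set (Set X)) : Prop :=
  ∀ x y : X, x ≠ y →
    (∃ U ∈ μ1, x ∈ U ∧ y ∉ U) ∧ (∃ V ∈ μ2, y ∈ V ∧ x ∉ V)

def PairwiseSymmetric {X : Type*} (μ1 μ2 : Set (Set X)) : Prop :=
  ∀ x y : X, (x ∈ gCl μ1 {y} → y ∈ gCl μ2 {x}) ∧ (x ∈ gCl μ2 {y} → y ∈ gCl μ1 {x})

def PairwiseTHalf {X : Type*} (μ1 μ2 : Set (Set X)) : Prop :=
  (∀ A : Set X, GClosedWrt μ1 μ2 A → gClosedSet μ1 A) ∧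
  (∀ A : Set X, GClosedWrt μ2 μ1 A → gClosedSet μ2 A)

def PairwiseR0 {X : Type*} (μ1 μ2 : Set (Set X)) : Prop :=
  (∀ G ∈ μ1, ∀ x ∈ G, gCl μ2 {x} ⊆ G) ∧ (∀ G ∈ μ2, ∀ x ∈ G, gCl μ1 {x} ⊆ G)

def PairwiseLamSymmetric {X : Type*} (μ1 μ2 : Set (Set X)) : Prop :=
  ∀ A : Set X, PairwiseLamClosed μ1 μ2 A →
    LamClosedWrt μ1 μ2 A ∧ LamClosedWrt μ2 μ1 A

/-- `A` and `B` are μ-weakly separated. -/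
def MuWeaklySeparated {X : Type*} (μ : Set (Set X)) (A B : Set X) : Prop :=
  ∃ U ∈ μ, ∃ V ∈ μ, A ⊆ U ∧ B ⊆ V ∧ A ∩ V = ∅ ∧ B ∩ U = ∅

def PairwiseTQuarter {X : Type*} (μ1 μ2 : Set (Set X)) : Prop :=
  ∀ P : Set X, P.Finite → ∀ y ∉ P,
    ∃ A : Set X, P ⊆ A ∧ y ∉ A ∧
      (A ∈ μ1 ∨ A ∈ μ2 ∨ gClosedSet μ1 A ∨ gClosedSet μ2 A)

def PairwiseTThreeEighths {X : Type*} (μ1 μ2 : Set (Set X)) : Prop :=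
  ∀ P : Set X, P.Countable → ∀ y ∉ P,
    ∃ A : Set X, P ⊆ A ∧ y ∉ A ∧
      (A ∈ μ1 ∨ A ∈ μ2 ∨ gClosedSet μ1 A ∨ gClosedSet μ2 A)

def PairwiseTFiveEighths {X : Type*} (μ1 μ2 : Set (Set X)) : Prop :=
  ∀ P : Set X, ∀ y ∉ P,
    ∃ A : Set X, P ⊆ A ∧ y ∉ A ∧
      (A ∈ μ1 ∨ A ∈ μ2 ∨ gClosedSet μ1 A ∨ gClosedSet μ2 A)
/-! Since `cl_μi(A)` is the least `μi`-closed set and `A^∧_μj` the least `∧_μj`-set containing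
`A`, any decomposition `A = F ∩ L` can be shrunk to `A = cl_μi(A) ∩ A^∧_μj`; conversely that
decomposition is itself one of the required form. -/

section GenTop

variable {X : Type*} (μ : Set (Set X)) {A F L : Set X}

lemma subset_wedgeOp : A ⊆ wedgeOp μ A :=
  fun _ hx _ hU => hU.2 hx

lemma wedgeOp_mono {B : Set X} (h : A ⊆ B) : wedgeOp μ A ⊆ wedgeOp μ B :=
  fun _ hx U hU => hx U ⟨hU.1, h.trans hU.2⟩

lemma isWedgeSet_wedgeOp : IsWedgeSet μ (wedgeOp μ A) :=
  (subset_wedgeOp μ).antisymm fun _ hx U hU => hx U ⟨hU.1, fun _ hy => hy U hU⟩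

lemma wedgeOp_subset_of_isWedgeSet (hL : IsWedgeSet μ L) (hAL : A ⊆ L) : wedgeOp μ A ⊆ L :=
  hL ▸ wedgeOp_mono μ hAL

lemma subset_gCl : A ⊆ gCl μ A :=
  fun _ hx _ hF => hF.2 hx

lemma gCl_subset_of_gClosedSet (hF : gClosedSet μ F) (hAF : A ⊆ F) : gCl μ A ⊆ F :=
  sInter_subset_of_mem ⟨hF, hAF⟩

lemma gClosedSet_gCl (hμ : ∀ S ⊆ μ, ⋃₀ S ∈ μ) : gClosedSet μ (gCl μ A) := by
  rw [gClosedSet, gCl, compl_sInter]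
  exact hμ _ (by rintro _ ⟨F, ⟨hF, -⟩, rfl⟩; exact hF)

end GenTop

section LamClosed

variable {X : Type*} {μi μj : Set (Set X)} {A : Set X}

lemma lamClosedWrt_iff_eq_gCl_inter_wedgeOp (hμi : ∀ S ⊆ μi, ⋃₀ S ∈ μi) :
    LamClosedWrt μi μj A ↔ A = gCl μi A ∩ wedgeOp μj A := by
  constructor
  · rintro ⟨F, L, hF, hL, rfl⟩
    refine subset_antisymm (subset_inter (subset_gCl _) (subset_wedgeOp _)) ?_
    exact inter_subset_inter (gCl_subset_of_gClosedSet _ hF inter_subset_left)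
      (wedgeOp_subset_of_isWedgeSet _ hL inter_subset_right)
  · intro h
    exact ⟨_, _, gClosedSet_gCl _ hμi, isWedgeSet_wedgeOp _, h⟩

lemma lamClosedWrt_iff_exists_gClosedSet_inter_wedgeOp (hμi : ∀ S ⊆ μi, ⋃₀ S ∈ μi) :
    LamClosedWrt μi μj A ↔ ∃ P : Set X, gClosedSet μi P ∧ A = P ∩ wedgeOp μj A := by
  constructor
  · intro h
    exact ⟨_, gClosedSet_gCl _ hμi, (lamClosedWrt_iff_eq_gCl_inter_wedgeOp hμi).mp h⟩
  · rintro ⟨P, hP, hA⟩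
    exact ⟨P, _, hP, isWedgeSet_wedgeOp _, hA⟩

lemma lamClosedWrt_iff_exists_gCl_inter_isWedgeSet (hμi : ∀ S ⊆ μi, ⋃₀ S ∈ μi) :
    LamClosedWrt μi μj A ↔ ∃ L : Set X, IsWedgeSet μj L ∧ A = gCl μi A ∩ L := by
  constructor
  · intro h
    exact ⟨_, isWedgeSet_wedgeOp _, (lamClosedWrt_iff_eq_gCl_inter_wedgeOp hμi).mp h⟩
  · rintro ⟨L, hL, hA⟩
    exact ⟨_, L, gClosedSet_gCl _ hμi, hL, hA⟩

end LamClosed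

theorem stmt10_general {X : Type*} (μ : Fin 2 → Set (Set X)) (hμ : ∀ k, IsGenTop (μ k))
    (i j : Fin 2) (A : Set X) :
    (LamClosedWrt (μ i) (μ j) A ↔
      ∃ P : Set X, gClosedSet (μ i) P ∧ A = P ∩ wedgeOp (μ j) A) ∧
    (LamClosedWrt (μ i) (μ j) A ↔
      ∃ L : Set X, IsWedgeSet (μ j) L ∧ A = gCl (μ i) A ∩ L) ∧
    (LamClosedWrt (μ i) (μ j) A ↔
      A = gCl (μ i) A ∩ wedgeOp (μ j) A) :=
  ⟨lamClosedWrt_iff_exists_gClosedSet_inter_wedgeOp (hμ i).2,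
    lamClosedWrt_iff_exists_gCl_inter_isWedgeSet (hμ i).2,
    lamClosedWrt_iff_eq_gCl_inter_wedgeOp (hμ i).2⟩

theorem stmt10 {X : Type*} (μ : Fin 2 → Set (Set X)) (hμ : ∀ k, IsGenTop (μ k))
    (i j : Fin 2) (hij : i ≠ j) (A : Set X) :
    (LamClosedWrt (μ i) (μ j) A ↔
      ∃ P : Set X, gClosedSet (μ i) P ∧ A = P ∩ wedgeOp (μ j) A) ∧
    (LamClosedWrt (μ i) (μ j) A ↔
      ∃ L : Set X, IsWedgeSet (μ j) L ∧ A = gCl (μ i) A ∩ L) ∧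
    (LamClosedWrt (μ i) (μ j) A ↔
      A = gCl (μ i) A ∩ wedgeOp (μ j) A) :=
  stmt10_general μ hμ i j A
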